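/- The Scott order ⊑_A, defined on configurations of an event structure with polarity A by y ⊑_A x iff y ⊇⁻ x ∩ y ⊆⁺ x, is a partial order. -/
import Mathlib

/-- An event structure `(E, ≤, Con)`: a finitary partial order of causal
dependency together with a nonempty consistency relation of finite subsets. -/
structure ES (E : Type) where
  le : E → E → Prop
  le_refl : ∀ e, le e e
  le_trans : ∀ a b c, le a b → le b c → le a c
  le_antisymm : ∀ a b, le a b → le b a → a = b
  finitary : ∀ e, {e' | le e' e}.Finite
  Con : Set (Set E)
  con_finite : ∀ X ∈ Con, X.Finite
  con_nonempty : Con.Nonempty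
  con_singleton : ∀ e : E, {e} ∈ Con
  con_mono : ∀ X Y : Set E, Y ⊆ X → X ∈ Con → Y ∈ Con
  con_extend : ∀ (X : Set E) (e e' : E), X ∈ Con → e' ∈ X → le e e' → insert e X ∈ Con

/-- A configuration: a consistent, down-closed subset of events. -/
def ES.IsConfig {E : Type} (S : ES E) (x : Set E) : Prop :=
  (∀ X : Set E, X ⊆ x → X.Finite → X ∈ S.Con) ∧
  (∀ e e', S.le e' e → e ∈ x → e' ∈ x)

/-- Direct image of a set under a partial function. -/
def pimage {E E' : Type} (f : E → Option E') (x : Set E) : Set E' :=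
  {e' | ∃ e ∈ x, f e = some e'}

/-- A (partial) map of event structures: direct images of configurations are
configurations, and the map is locally injective on configurations. -/
def IsMap {E E' : Type} (S : ES E) (S' : ES E') (f : E → Option E') : Prop :=
  (∀ x : Set E, S.IsConfig x → S'.IsConfig (pimage f x)) ∧
  (∀ x : Set E, S.IsConfig x → ∀ e₁ ∈ x, ∀ e₂ ∈ x, ∀ e',
      f e₁ = some e' → f e₂ = some e' → e₁ = e₂)

/-- A total map of event structures, as a total function. -/
def IsTotalMap {E E' : Type} (S : ES E) (S' : ES E') (f : E → E') : Prop :=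
  (∀ x : Set E, S.IsConfig x → S'.IsConfig (f '' x)) ∧
  (∀ x : Set E, S.IsConfig x → Set.InjOn f x)

/-- The Scott order on configurations: `y ⊑ x` iff `y ⊇⁻ x ∩ y ⊆⁺ x`, i.e.
all events of `y \ x` are negative and all events of `x \ y` are positive
(`pol e = true` means positive, `false` negative). -/
def ScottLe {E : Type} (pol : E → Bool) (y x : Set E) : Prop :=
  (∀ e ∈ y \ x, pol e = false) ∧ (∀ e ∈ x \ y, pol e = true)

/-- the Scott order is a partial order on the configurations of
an event structure with polarity: reflexive, transitive and antisymmetric. -/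
theorem stmt11 {E : Type} (S : ES E) (pol : E → Bool) :
    (∀ x : Set E, S.IsConfig x → ScottLe pol x x) ∧
    (∀ x y z : Set E, S.IsConfig x → S.IsConfig y → S.IsConfig z →
      ScottLe pol z y → ScottLe pol y x → ScottLe pol z x) ∧
    (∀ x y : Set E, S.IsConfig x → S.IsConfig y →
      ScottLe pol y x → ScottLe pol x y → x = y) := by
  refine ⟨fun x _ => ⟨fun e he => absurd he.1 he.2, fun e he => absurd he.1 he.2⟩, ?_, ?_⟩
  · rintro x y z _ _ _ ⟨hzy, hyz⟩ ⟨hyx, hxy⟩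
    constructor
    · intro e ⟨hez, hex⟩
      by_cases hey : e ∈ y
      · exact hyx e ⟨hey, hex⟩
      · exact hzy e ⟨hez, hey⟩
    · intro e ⟨hex, hez⟩
      by_cases hey : e ∈ y
      · exact hyz e ⟨hey, hez⟩
      · exact hxy e ⟨hex, hey⟩
  · rintro x y _ _ ⟨hyx, hxy⟩ ⟨hxy', hyx'⟩
    ext e
    constructor
    · intro hex
      by_contra hey
      have := hxy e ⟨hex, hey⟩
      have := hxy' e ⟨hex, hey⟩
      simp_all
    · intro hey
      by_contra hex
      have := hyx e ⟨hey, hex⟩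
      have := hyx' e ⟨hey, hex⟩
      simp_all
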